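/- (Fundamental theorem of the power quantum calculus) Let f : ℝ → ℝ be continuous at 0 and n,q-differentiable on I (in particular differentiable at 0), and let a, b ∈ I. Suppose the series defining ∫_0^a D_{n,q} f(t) d_{n,q}t and ∫_0^b D_{n,q} f(t) d_{n,q}t converge. Then ∫_a^b D_{n,q} f(t) d_{n,q}t = f(b) − f(a). -/

import Mathlib

open Filter
open scoped Classical

noncomputable section

/-- `[k]_n = ∑_{i=0}^{k-1} n^i` (so `[0]_n = 0`). -/
def nbr (n k : ℕ) : ℕ := ∑ i ∈ Finset.range k, n ^ i

/-- `h(t) = q·t^n`. -/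
def hfun (q : ℝ) (n : ℕ) (t : ℝ) : ℝ := q * t ^ n

/-- `θ = q^(1/(1-n))` (meaningful for `n ≥ 3`). -/
def theta (q : ℝ) (n : ℕ) : ℝ := q ^ ((1 : ℝ) / (1 - (n : ℝ)))

/-- `S = {0}` if `n = 1`, and `S = {-θ, 0, θ}` if `n ≥ 3`. -/
def Sset (q : ℝ) (n : ℕ) : Set ℝ :=
  if n = 1 then {0} else {-theta q n, 0, theta q n}

/-- `I = (-θ, θ)` (all of `ℝ` when `n = 1`). -/
def Iset (q : ℝ) (n : ℕ) : Set ℝ :=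
  if n = 1 then Set.univ else Set.Ioo (-theta q n) (theta q n)

/-- The `n,q`-power difference operator `D_{n,q}`. -/
def Dnq (q : ℝ) (n : ℕ) (f : ℝ → ℝ) (t : ℝ) : ℝ :=
  if t ∈ Sset q n then deriv f t
  else (f (q * t ^ n) - f t) / (q * t ^ n - t)

/-- The `k`-th summand of the series defining the `n,q`-integral `∫_0^x f(t) d_{n,q}t`. -/
def nqSeq (q : ℝ) (n : ℕ) (f : ℝ → ℝ) (x : ℝ) (k : ℕ) : ℝ :=
  q ^ nbr n k * x ^ n ^ k * (q ^ n ^ k * x ^ (n ^ k * (n - 1)) - 1) *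
    f (q ^ nbr n k * x ^ n ^ k)

/-- `∫_0^x f(t) d_{n,q}t`. -/
def nqInt0 (q : ℝ) (n : ℕ) (f : ℝ → ℝ) (x : ℝ) : ℝ := -∑' k : ℕ, nqSeq q n f x k

/-- `∫_a^b f(t) d_{n,q}t = ∫_0^b f(t) d_{n,q}t − ∫_0^a f(t) d_{n,q}t`. -/
def nqInt (q : ℝ) (n : ℕ) (f : ℝ → ℝ) (a b : ℝ) : ℝ :=
  nqInt0 q n f b - nqInt0 q n f a

/-- The orbit `[s]_{n,q} = {q^{[k]_n}·s^{n^k} : k ∈ ℕ}`. -/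
def nqOrbit (q : ℝ) (n : ℕ) (s : ℝ) : Set ℝ :=
  Set.range fun k : ℕ => q ^ nbr n k * s ^ n ^ k

/-- The `n,q`-interval `[a,b]_{n,q}`. -/
def nqInterval (q : ℝ) (n : ℕ) (a b : ℝ) : Set ℝ :=
  nqOrbit q n a ∪ nqOrbit q n b ∪ {0}

/-
The summand of the series at `x` is `(h t - t) · D_{n,q} f(t)` at the orbit point
`t = h^[k] x` of `h t = q t^n`, and `(h t - t) · D_{n,q} f(t) = f (h t) - f t` for every `t`:
the points of `S` are fixed by `h`, and so is every `t` where the difference quotient has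
denominator `0`, so both sides vanish there. The partial sums therefore telescope to
`f (h^[N] x) - f x`. For `x ∈ I` the map `h` contracts `[-|x|, |x|]` by the factor
`q |x|^(n-1) < 1`, so `h^[N] x → 0` and continuity of `f` at `0` gives
`∫_0^x D_{n,q} f(t) d_{n,q}t = f x - f 0`.
-/

lemma nbr_succ (n k : ℕ) : nbr n (k + 1) = n * nbr n k + 1 := by
  simp only [nbr, Finset.sum_range_succ', Finset.mul_sum, pow_succ', pow_zero]

lemma nbr_succ' (n k : ℕ) : nbr n (k + 1) = nbr n k + n ^ k :=
  Finset.sum_range_succ _ _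

lemma hfun_iterate (q : ℝ) (n k : ℕ) (x : ℝ) :
    (hfun q n)^[k] x = q ^ nbr n k * x ^ n ^ k := by
  induction k with
  | zero => simp [nbr]
  | succ k ih =>
    rw [Function.iterate_succ_apply', ih, hfun, nbr_succ, pow_succ, mul_pow, ← pow_mul,
      ← pow_mul, pow_succ', pow_mul]
    ring

lemma nqSeq_eq_hfun_sub_mul {q : ℝ} {n : ℕ} (hn : 0 < n) (g : ℝ → ℝ) (x : ℝ) (k : ℕ) :
    nqSeq q n g x k = (hfun q n ((hfun q n)^[k] x) - (hfun q n)^[k] x) * g ((hfun q n)^[k] x) := by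
  have hexp : n ^ (k + 1) = n ^ k + n ^ k * (n - 1) := by
    rw [pow_succ, ← mul_one_add]; congr 1; omega
  rw [← Function.iterate_succ_apply' (hfun q n), hfun_iterate, hfun_iterate, nqSeq, nbr_succ',
    hexp, pow_add, pow_add]
  ring

lemma theta_pow_sub_one {q : ℝ} (hq : 0 < q) {n : ℕ} (hn : 1 < n) :
    theta q n ^ (n - 1) = q⁻¹ := by
  have hcast : ((n - 1 : ℕ) : ℝ) = -(1 - n) := by push_cast [Nat.cast_sub hn.le]; ring
  have hne : (1 : ℝ) - n ≠ 0 := by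
    have : (1 : ℝ) < n := by exact_mod_cast hn
    linarith
  rw [theta, ← Real.rpow_natCast, ← Real.rpow_mul hq.le, hcast, mul_neg,
    one_div_mul_cancel hne, Real.rpow_neg_one]

lemma hfun_theta {q : ℝ} (hq : 0 < q) {n : ℕ} (hn : 1 < n) : hfun q n (theta q n) = theta q n := by
  rw [hfun, ← pow_sub_mul_pow _ hn.le, pow_one, theta_pow_sub_one hq hn, ← mul_assoc,
    mul_inv_cancel₀ hq.ne', one_mul]

lemma hfun_eq_self_of_mem_Sset {q : ℝ} (hq : 0 < q) {n : ℕ} (hn : Odd n) {t : ℝ}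
    (ht : t ∈ Sset q n) : hfun q n t = t := by
  have hzero : hfun q n 0 = 0 := by simp [hfun, hn.pos.ne']
  unfold Sset at ht
  split_ifs at ht with h1
  · rw [Set.mem_singleton_iff.mp ht, hzero]
  · have hθ := hfun_theta hq (lt_of_le_of_ne hn.pos (Ne.symm h1))
    rcases ht with rfl | rfl | rfl
    · rw [hfun, hn.neg_pow, mul_neg, ← hfun, hθ]
    · exact hzero
    · exact hθ

lemma hfun_sub_mul_Dnq {q : ℝ} (hq : 0 < q) {n : ℕ} (hn : Odd n) (f : ℝ → ℝ) (t : ℝ) :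
    (hfun q n t - t) * Dnq q n f t = f (hfun q n t) - f t := by
  by_cases hS : t ∈ Sset q n
  · rw [hfun_eq_self_of_mem_Sset hq hn hS, sub_self, sub_self, zero_mul]
  by_cases hfix : hfun q n t - t = 0
  · rw [hfix, zero_mul, sub_eq_zero.mp hfix, sub_self]
  · rw [Dnq, if_neg hS, ← hfun, mul_div_cancel₀ _ hfix]

lemma nqSeq_Dnq {q : ℝ} (hq : 0 < q) {n : ℕ} (hn : Odd n) (f : ℝ → ℝ) (x : ℝ) (k : ℕ) :
    nqSeq q n (Dnq q n f) x k = f ((hfun q n)^[k + 1] x) - f ((hfun q n)^[k] x) := by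
  rw [nqSeq_eq_hfun_sub_mul hn.pos, hfun_sub_mul_Dnq hq hn, Function.iterate_succ_apply']

lemma mul_abs_pow_lt_one_of_mem_Iset {q : ℝ} (hq0 : 0 < q) (hq1 : q < 1) {n : ℕ} (hn : 0 < n)
    {x : ℝ} (hx : x ∈ Iset q n) : q * |x| ^ (n - 1) < 1 := by
  unfold Iset at hx
  split_ifs at hx with h1
  · simpa [h1] using hq1
  have hn1 : 1 < n := lt_of_le_of_ne hn (Ne.symm h1)
  have hxθ : |x| ^ (n - 1) < theta q n ^ (n - 1) :=
    pow_lt_pow_left₀ (abs_lt.mpr hx) (abs_nonneg x) (by omega)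
  calc q * |x| ^ (n - 1) < q * theta q n ^ (n - 1) := mul_lt_mul_of_pos_left hxθ hq0
    _ = 1 := by rw [theta_pow_sub_one hq0 hn1, mul_inv_cancel₀ hq0.ne']

lemma abs_hfun_le {q : ℝ} (hq : 0 ≤ q) {n : ℕ} (hn : 0 < n) {t x : ℝ} (ht : |t| ≤ |x|) :
    |hfun q n t| ≤ q * |x| ^ (n - 1) * |t| := by
  rw [hfun, abs_mul, abs_of_nonneg hq, abs_pow, ← Nat.sub_add_cancel hn, pow_succ,
    Nat.add_sub_cancel, ← mul_assoc]
  gcongr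

lemma tendsto_hfun_iterate_zero {q : ℝ} (hq0 : 0 < q) (hq1 : q < 1) {n : ℕ} (hn : 0 < n)
    {x : ℝ} (hx : x ∈ Iset q n) : Tendsto (fun k ↦ (hfun q n)^[k] x) atTop (nhds 0) := by
  set r := q * |x| ^ (n - 1)
  have hr0 : 0 ≤ r := by positivity
  have hr1 : r < 1 := mul_abs_pow_lt_one_of_mem_Iset hq0 hq1 hn hx
  have hbound : ∀ k, |(hfun q n)^[k] x| ≤ r ^ k * |x| := by
    intro k
    induction k with
    | zero => simp
    | succ k ih =>
      have hle : |(hfun q n)^[k] x| ≤ |x| :=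
        ih.trans (mul_le_of_le_one_left (abs_nonneg x) (pow_le_one₀ hr0 hr1.le))
      rw [Function.iterate_succ_apply', pow_succ', mul_assoc]
      exact (abs_hfun_le hq0.le hn hle).trans (mul_le_mul_of_nonneg_left ih hr0)
  have hgeom : Tendsto (fun k ↦ r ^ k * |x|) atTop (nhds 0) := by
    simpa using (tendsto_pow_atTop_nhds_zero_of_lt_one hr0 hr1).mul_const |x|
  exact squeeze_zero_norm hbound hgeom

lemma nqInt0_Dnq {q : ℝ} (hq0 : 0 < q) (hq1 : q < 1) {n : ℕ} (hn : Odd n) {f : ℝ → ℝ}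
    (hf0 : ContinuousAt f 0) {x : ℝ} (hx : x ∈ Iset q n)
    (hs : Summable (nqSeq q n (Dnq q n f) x)) :
    nqInt0 q n (Dnq q n f) x = f x - f 0 := by
  have hpartial : ∀ N, ∑ k ∈ Finset.range N, nqSeq q n (Dnq q n f) x k =
      f ((hfun q n)^[N] x) - f x := fun N ↦ by
    simp only [nqSeq_Dnq hq0 hn, Finset.sum_range_sub (fun k ↦ f ((hfun q n)^[k] x)),
      Function.iterate_zero_apply]
  have hlim : Tendsto (fun N ↦ f ((hfun q n)^[N] x) - f x) atTop (nhds (f 0 - f x)) :=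
    (hf0.tendsto.comp (tendsto_hfun_iterate_zero hq0 hq1 hn.pos hx)).sub_const (f x)
  rw [nqInt0, ((hs.hasSum_iff_tendsto_nat).mpr (by simpa only [hpartial] using hlim)).tsum_eq]
  ring

theorem stmt9_general (q : ℝ) (hq0 : 0 < q) (hq1 : q < 1) (n : ℕ) (hn : Odd n)
    (f : ℝ → ℝ) (hf0 : ContinuousAt f 0)
    (a b : ℝ) (ha : a ∈ Iset q n) (hb : b ∈ Iset q n)
    (hsa : Summable (nqSeq q n (Dnq q n f) a))
    (hsb : Summable (nqSeq q n (Dnq q n f) b)) :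
    nqInt q n (Dnq q n f) a b = f b - f a := by
  rw [nqInt, nqInt0_Dnq hq0 hq1 hn hf0 hb hsb, nqInt0_Dnq hq0 hq1 hn hf0 ha hsa]
  ring

theorem stmt9 (q : ℝ) (hq0 : 0 < q) (hq1 : q < 1) (n : ℕ) (hn : Odd n)
    (f : ℝ → ℝ) (hf0 : ContinuousAt f 0) (hfd : DifferentiableAt ℝ f 0)
    (a b : ℝ) (ha : a ∈ Iset q n) (hb : b ∈ Iset q n)
    (hsa : Summable (nqSeq q n (Dnq q n f) a))
    (hsb : Summable (nqSeq q n (Dnq q n f) b)) :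
    nqInt q n (Dnq q n f) a b = f b - f a :=
  stmt9_general q hq0 hq1 n hn f hf0 a b ha hb hsa hsb
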